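/- Let X be a locally convex space and f : X → ℝ∪{+∞} a proper convex lower semicontinuous function that is continuous on the (nonempty) interior of its domain. Then ∂f is maximal monotone. -/

import Mathlib

open scoped Topology

section Defs

variable {X : Type*} [AddCommGroup X] [Module ℝ X] [TopologicalSpace X]

/-- `p ∈ ∂f(x)`: `f x` is finite and `f y ≥ f x + ⟨y - x, p⟩` for all `y`. -/
def IsSubgrad (f : X → EReal) (x : X) (p : X →L[ℝ] ℝ) : Prop :=
  f x ≠ ⊤ ∧ f x ≠ ⊥ ∧ ∀ y, f x + (p (y - x) : EReal) ≤ f y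

/-- Graph of the convex subdifferential of `f`. -/
def graphSub (f : X → EReal) : Set (X × (X →L[ℝ] ℝ)) :=
  {q | IsSubgrad f q.1 q.2}

/-- Domain `D(∂f)` of the subdifferential. -/
def subdiffDom (f : X → EReal) : Set X := {x | ∃ p, IsSubgrad f x p}

/-- Range `R(∂f)` of the subdifferential. -/
def subdiffRan (f : X → EReal) : Set (X →L[ℝ] ℝ) := {p | ∃ x, IsSubgrad f x p}

/-- Monotone subset of `X × X*`. -/
def MonotoneSet (S : Set (X × (X →L[ℝ] ℝ))) : Prop :=
  ∀ a ∈ S, ∀ b ∈ S, 0 ≤ a.2 (a.1 - b.1) - b.2 (a.1 - b.1)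

/-- Maximal monotone subset of `X × X*` (maximal w.r.t. graph inclusion). -/
def MaxMonotoneSet (S : Set (X × (X →L[ℝ] ℝ))) : Prop :=
  MonotoneSet S ∧ ∀ T, MonotoneSet T → S ⊆ T → T = S

/-- Proper function: never `−∞` and not identically `+∞`. -/
def ProperE {Y : Type*} (f : Y → EReal) : Prop :=
  (∃ x, f x ≠ ⊤) ∧ ∀ x, f x ≠ ⊥

/-- Convexity of an extended-real-valued function via its epigraph. -/
def ConvexEpi (f : X → EReal) : Prop :=
  Convex ℝ {q : X × ℝ | f q.1 ≤ (q.2 : EReal)}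

/-- The lsc convex hull: the greatest lsc convex function majorized by `f`. -/
noncomputable def lscConvHull (f : X → EReal) : X → EReal := fun x =>
  sSup {v | ∃ g : X → EReal, ConvexEpi g ∧ LowerSemicontinuous g ∧ g ≤ f ∧ v = g x}

/-- Convex conjugate w.r.t. the dual system `(X, X*)`. -/
noncomputable def conjE (f : X → EReal) (p : X →L[ℝ] ℝ) : EReal :=
  ⨆ x, ((p x : EReal) - f x)

/-- Biconjugate `f**`. -/
noncomputable def biconjE (f : X → EReal) (x : X) : EReal :=
  ⨆ p : X →L[ℝ] ℝ, ((p x : EReal) - conjE f p)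

/-- Fitzpatrick function of `∂f`. -/
noncomputable def fitzSub (f : X → EReal) (x : X) (p : X →L[ℝ] ℝ) : EReal :=
  ⨆ a, ⨆ s, ⨆ _ : IsSubgrad f a s, ((s (x - a) + p a : ℝ) : EReal)

/-- Upper envelope `f^∪(x) = sup{⟨x−a, a*⟩ + f(a) : (a,a*) ∈ Graph ∂f}`. -/
noncomputable def upperEnv (f : X → EReal) (x : X) : EReal :=
  ⨆ a, ⨆ s, ⨆ _ : IsSubgrad f a s, ((s (x - a) : EReal) + f a)

end Defs

/-!
Monotonicity of `∂f` is immediate. For maximality, let `(x₀, p₀)` be monotonically related to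
`∂f` and let `c` be interior to `dom f`; put `v = c - x₀`. Along the segment `x₀ + t • v`, the
points beyond a threshold `τ ∈ [0, 1]` are interior to `dom f`, where continuity makes `f`
subdifferentiable, and the monotone relation forces each such subgradient to have slope at least
`p₀ v`. Hence `t ↦ f (x₀ + t • v) - t * p₀ v` is nondecreasing on `[τ, 1]` (lower semicontinuity
covers `t = τ`). If `τ > 0`, the line of slope `p₀ v - 1` through the graph at the threshold
misses the interior of the epigraph; Hahn–Banach separation gives a subgradient there of slope at
most `p₀ v - 1`, against the monotone relation. So `τ = 0`, i.e. `f x₀ + p₀ (c - x₀) ≤ f c`, and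
this affine minorization extends from the interior of `dom f` to all of `X` because the convex
epigraph lies in the closure of its interior.
-/

open Set

-- `ConvexEpi f` is the convexity of this set.
def epigraphE {X : Type*} (f : X → EReal) : Set (X × ℝ) := {q | f q.1 ≤ q.2}

section Epigraph

variable {X : Type*} [TopologicalSpace X] {f : X → EReal}

theorem LowerSemicontinuous.isClosed_epigraphE (hf : LowerSemicontinuous f) :
    IsClosed (epigraphE f) :=
  hf.isClosed_epigraph.preimage
    (continuous_fst.prodMk (continuous_coe_real_ereal.comp continuous_snd))

theorem mem_interior_epigraphE_of_continuousAt {x : X} {r : ℝ} (hf : ContinuousAt f x)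
    (hr : f x < r) : (x, r) ∈ interior (epigraphE f) := by
  obtain ⟨r', hxr', hr'r⟩ := EReal.exists_between_coe_real hr
  refine mem_interior_iff_mem_nhds.2 (Filter.mem_of_superset
    (prod_mem_nhds (hf (Iio_mem_nhds hxr')) (Ioi_mem_nhds (EReal.coe_lt_coe_iff.1 hr'r))) ?_)
  rintro ⟨y, s⟩ ⟨hy, hs⟩
  exact (show f y < r' from hy).le.trans (EReal.coe_le_coe_iff.2 (le_of_lt hs))

theorem lt_of_mem_interior_epigraphE {x : X} {r : ℝ} (h : (x, r) ∈ interior (epigraphE f)) :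
    f x < r := by
  have hnhds : (fun t : ℝ => (x, t)) ⁻¹' interior (epigraphE f) ∈ 𝓝 r :=
    (Continuous.prodMk_right x).continuousAt.preimage_mem_nhds (isOpen_interior.mem_nhds h)
  have hev : ∀ᶠ t in 𝓝[<] r, (x, t) ∈ interior (epigraphE f) :=
    mem_nhdsWithin_of_mem_nhds hnhds
  obtain ⟨t, ht, htr⟩ := (hev.and self_mem_nhdsWithin).exists
  have hxt : (x, t) ∈ epigraphE f := interior_subset ht
  exact lt_of_le_of_lt hxt (EReal.coe_lt_coe_iff.2 htr)

theorem fst_mem_interior_dom_of_mem_interior_epigraphE {x : X} {r : ℝ}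
    (h : (x, r) ∈ interior (epigraphE f)) : x ∈ interior {x | f x ≠ ⊤} := by
  refine interior_maximal ?_ (isOpenMap_fst _ isOpen_interior) ⟨_, h, rfl⟩
  rintro _ ⟨⟨y, s⟩, hys, rfl⟩
  have hys' : (y, s) ∈ epigraphE f := interior_subset hys
  exact ne_top_of_le_ne_top (EReal.coe_ne_top s) hys'

end Epigraph

section Convex

variable {X : Type*} [AddCommGroup X] [Module ℝ X] {f : X → EReal}

theorem ConvexEpi.convex_dom (hf : ConvexEpi f) : Convex ℝ {x | f x ≠ ⊤} := by
  convert hf.linear_image (LinearMap.fst ℝ X ℝ)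
  ext x
  refine ⟨fun hx => ⟨(x, (f x).toReal), EReal.le_coe_toReal hx, rfl⟩, ?_⟩
  rintro ⟨⟨y, s⟩, hys, rfl⟩
  exact ne_top_of_le_ne_top (EReal.coe_ne_top s) hys

variable [TopologicalSpace X] [IsTopologicalAddGroup X] [ContinuousSMul ℝ X]

theorem ConvexEpi.epigraphE_subset_closure_interior (hf : ConvexEpi f)
    (hne : (interior (epigraphE f)).Nonempty) :
    epigraphE f ⊆ closure (interior (epigraphE f)) := by
  rw [Convex.closure_interior_eq_closure_of_nonempty_interior (s := epigraphE f) hf hne]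
  exact subset_closure

theorem ConvexEpi.exists_isSubgrad_of_disjoint {x : X} {m : ℝ} (hf : ConvexEpi f)
    (hm : f x = m) {C : Set (X × ℝ)} (hC : Convex ℝ C) (hxC : (x, m) ∈ C)
    (hdisj : Disjoint (interior (epigraphE f)) C) {c : X} {r r' : ℝ} (hrr' : r ≤ r')
    (hcC : (c, r) ∈ C) (hc : (c, r') ∈ interior (epigraphE f)) :
    ∃ s, IsSubgrad f x s ∧ ∀ q ∈ C, q.2 ≤ m + s (q.1 - x) := by
  obtain ⟨Φ, u, hlt, hle⟩ :=
    geometric_hahn_banach_open hf.interior isOpen_interior hC hdisj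
  set μ := Φ (0, 1)
  set φ := Φ.comp (ContinuousLinearMap.inl ℝ X ℝ)
  have hΦ : ∀ y r, Φ (y, r) = φ y + r * μ := fun y r => by
    rw [show ((y, r) : X × ℝ) = (y, 0) + r • (0, 1) by simp, map_add, map_smul]
    simp [φ, μ]
  -- the hyperplane is not vertical, since `(c, r) ∈ C` lies below `(c, r') ∈ interior (epi f)`
  have hμ : μ < 0 := by
    have := (hlt _ hc).trans_le (hle _ hcC)
    rw [hΦ, hΦ] at this
    nlinarith
  set s := (-μ)⁻¹ • φ
  have hs : ∀ y r, Φ (y, r) - Φ (x, m) = -μ * (m + s (y - x) - r) := fun y r => by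
    simp only [hΦ, s, smul_apply, map_sub, smul_eq_mul]
    field_simp [hμ.ne]
    ring
  have hepi : ∀ q ∈ epigraphE f, Φ q ≤ u := fun q hq =>
    closure_minimal (fun q hq => (hlt q hq).le) (isClosed_le Φ.continuous continuous_const)
      (hf.epigraphE_subset_closure_interior ⟨_, hc⟩ hq)
  have hux : u ≤ Φ (x, m) := hle _ hxC
  refine ⟨s, ⟨by simp [hm], by simp [hm], fun y => ?_⟩, fun q hq => ?_⟩
  · rw [hm, ← EReal.coe_add]
    refine EReal.le_of_forall_lt_iff_le.1 fun r hr => EReal.coe_le_coe_iff.2 ?_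
    have hyr := hepi (y, r) hr.le
    nlinarith [hs y r]
  · nlinarith [hs q.1 q.2, hle q hq, hepi (x, m) hm.le]

theorem ConvexEpi.exists_isSubgrad_of_continuousAt {x : X} (hf : ConvexEpi f)
    (hx : f x ≠ ⊤) (hx' : f x ≠ ⊥) (hcont : ContinuousAt f x) : ∃ s, IsSubgrad f x s := by
  lift f x to ℝ using ⟨hx, hx'⟩ with m hm
  have hint : (x, m + 1) ∈ interior (epigraphE f) :=
    mem_interior_epigraphE_of_continuousAt hcont (by rw [← hm]; exact_mod_cast lt_add_one m)
  obtain ⟨s, hs, -⟩ := hf.exists_isSubgrad_of_disjoint hm.symm (convex_singleton (x, m))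
    (mem_singleton _)
    (disjoint_singleton_right.2 fun h => (lt_of_mem_interior_epigraphE h).ne hm.symm)
    (le_add_of_nonneg_right zero_le_one) (mem_singleton _) hint
  exact ⟨s, hs⟩

theorem ConvexEpi.coe_le_of_forall_mem_interior_dom (hf : ConvexEpi f)
    (hne : (interior (epigraphE f)).Nonempty) {ℓ : X → ℝ} (hℓ : Continuous ℓ)
    (h : ∀ x ∈ interior {x | f x ≠ ⊤}, (ℓ x : EReal) ≤ f x) (y : X) : (ℓ y : EReal) ≤ f y := by
  have hsub : interior (epigraphE f) ⊆ {q | ℓ q.1 ≤ q.2} := fun q hq =>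
    EReal.coe_le_coe_iff.1 <| (h _ (fst_mem_interior_dom_of_mem_interior_epigraphE hq)).trans
      (interior_subset (s := epigraphE f) hq)
  have hepi := (hf.epigraphE_subset_closure_interior hne).trans
    (closure_minimal hsub (isClosed_le (hℓ.comp continuous_fst) continuous_snd))
  exact EReal.le_of_forall_lt_iff_le.1 fun r hr =>
    EReal.coe_le_coe_iff.2 (hepi (show (y, r) ∈ epigraphE f from hr.le))

end Convex

section Monotone

variable {X : Type*} [AddCommGroup X] [Module ℝ X] [TopologicalSpace X]

theorem MonotoneSet.mono {S T : Set (X × (X →L[ℝ] ℝ))} (hT : MonotoneSet T) (hST : S ⊆ T) :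
    MonotoneSet S :=
  fun a ha b hb => hT a (hST ha) b (hST hb)

theorem monotoneSet_graphSub (f : X → EReal) : MonotoneSet (graphSub f) := by
  rintro ⟨a, s⟩ ⟨ha, ha', has⟩ ⟨b, t⟩ ⟨hb, hb', hbt⟩
  have hab := has b
  have hba := hbt a
  lift f a to ℝ using ⟨ha, ha'⟩ with fa
  lift f b to ℝ using ⟨hb, hb'⟩ with fb
  norm_cast at hab hba
  have : s (b - a) = -s (a - b) := by rw [← map_neg, neg_sub]
  show 0 ≤ s (a - b) - t (a - b)
  linarith

theorem le_apply_of_monotoneSet_insert {f : X → EReal} {x₀ v : X} {p₀ s : X →L[ℝ] ℝ}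
    (hmono : MonotoneSet (insert (x₀, p₀) (graphSub f))) {u : ℝ} (hu : 0 < u)
    (hs : IsSubgrad f (x₀ + u • v) s) : p₀ v ≤ s v := by
  have := hmono _ (mem_insert _ _) _
    (mem_insert_of_mem _ (show (x₀ + u • v, s) ∈ graphSub f from hs))
  simp only [sub_add_cancel_left, map_neg, map_smul, smul_eq_mul] at this
  nlinarith

end Monotone

section Segment

variable {X : Type*} [AddCommGroup X] [Module ℝ X] [TopologicalSpace X]
  [IsTopologicalAddGroup X] [ContinuousSMul ℝ X]

theorem Convex.exists_threshold_of_mem_interior {D : Set X} (hD : Convex ℝ D) (x : X) {c : X}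
    (hc : c ∈ interior D) :
    ∃ τ ∈ Icc (0 : ℝ) 1, (∀ t ∈ Ico 0 τ, x + t • (c - x) ∉ D) ∧
      ∀ t ∈ Ioc τ 1, x + t • (c - x) ∈ interior D := by
  set S := {t ∈ Icc (0 : ℝ) 1 | x + t • (c - x) ∈ D}
  have h1 : (1 : ℝ) ∈ S := ⟨right_mem_Icc.2 zero_le_one, by simpa using interior_subset hc⟩
  have hbdd : BddBelow S := ⟨0, fun t ht => ht.1.1⟩
  refine ⟨sInf S, ⟨le_csInf ⟨1, h1⟩ fun t ht => ht.1.1, csInf_le hbdd h1⟩,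
    fun t ht hxt => ?_, fun t ht => ?_⟩
  · exact notMem_of_lt_csInf ht.2 hbdd ⟨⟨ht.1, (ht.2.trans_le (csInf_le hbdd h1)).le⟩, hxt⟩
  · obtain ⟨t', ⟨-, ht'D⟩, ht't⟩ := exists_lt_of_csInf_lt ⟨1, h1⟩ ht.1
    have h1t' : 0 < 1 - t' := by linarith [ht.2]
    convert hD.add_smul_sub_mem_interior ht'D hc (t := (t - t') / (1 - t'))
      ⟨div_pos (by linarith) h1t', (div_le_one h1t').2 (by linarith [ht.2])⟩ using 1
    rw [show c - (x + t' • (c - x)) = (1 - t') • (c - x) by module, smul_smul,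
      div_mul_cancel₀ _ h1t'.ne']
    module

end Segment

section Key

variable {X : Type*} [AddCommGroup X] [Module ℝ X] [TopologicalSpace X]
  [IsTopologicalAddGroup X] [ContinuousSMul ℝ X] {f : X → EReal} {x₀ : X} {p₀ : X →L[ℝ] ℝ}

theorem add_mul_le_of_monotoneSet_insert (hbot : ∀ x, f x ≠ ⊥) (hf : ConvexEpi f)
    (hlsc : LowerSemicontinuous f) (hcont : ContinuousOn f (interior {x | f x ≠ ⊤}))
    (hmono : MonotoneSet (insert (x₀, p₀) (graphSub f))) {v : X} {τ : ℝ} (hτ : 0 ≤ τ)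
    (hin : ∀ t ∈ Ioc τ 1, x₀ + t • v ∈ interior {x | f x ≠ ⊤})
    {u t : ℝ} (hu : τ ≤ u) (hut : u ≤ t) (ht : t ≤ 1) :
    f (x₀ + u • v) + ((t - u) * p₀ v : ℝ) ≤ f (x₀ + t • v) := by
  have hopen : ∀ u ∈ Ioc τ 1, ∀ t, u ≤ t →
      f (x₀ + u • v) + ((t - u) * p₀ v : ℝ) ≤ f (x₀ + t • v) := by
    intro u hu t hut
    have hint := hin u hu
    obtain ⟨s, hs⟩ := hf.exists_isSubgrad_of_continuousAt (interior_subset hint) (hbot _)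
      (hcont.continuousAt (isOpen_interior.mem_nhds hint))
    have hsv := le_apply_of_monotoneSet_insert hmono (hτ.trans_lt hu.1) hs
    have hdiff : x₀ + t • v - (x₀ + u • v) = (t - u) • v := by module
    calc f (x₀ + u • v) + ((t - u) * p₀ v : ℝ)
        ≤ f (x₀ + u • v) + (s (x₀ + t • v - (x₀ + u • v)) : ℝ) := by
          rw [hdiff, map_smul, smul_eq_mul]
          gcongr
      _ ≤ f (x₀ + t • v) := hs.2.2 _
  rcases hu.lt_or_eq with hu | rfl
  · exact hopen u ⟨hu, hut.trans ht⟩ t hut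
  rcases hut.lt_or_eq with hut | rfl
  · rcases eq_or_ne (f (x₀ + t • v)) ⊤ with htop | htop
    · simp [htop]
    lift f (x₀ + t • v) to ℝ using ⟨htop, hbot _⟩ with r hr
    have hle_iff : ∀ (e : EReal) (a : ℝ), e ≤ ((r - a : ℝ) : EReal) ↔ e + a ≤ r := fun e a => by
      rw [EReal.coe_sub, EReal.le_sub_iff_add_le (.inl (EReal.coe_ne_bot _))
        (.inl (EReal.coe_ne_top _))]
    -- let `u ↓ τ` in `hopen`, the epigraph of `f` being closed
    have hsub : Ioc τ t ⊆ (fun w : ℝ => (x₀ + w • v, r - (t - w) * p₀ v)) ⁻¹' epigraphE f :=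
      fun w hw => (hle_iff _ _).2 (hr ▸ hopen w ⟨hw.1, hw.2.trans ht⟩ t hw.2)
    have hmem := (hlsc.isClosed_epigraphE.preimage (by fun_prop)).closure_subset_iff.2 hsub
      (by rw [closure_Ioc hut.ne]; exact left_mem_Icc.2 hut.le)
    exact (hle_iff _ _).1 hmem
  · simp

theorem add_le_of_monotoneSet_insert (hbot : ∀ x, f x ≠ ⊥) (hf : ConvexEpi f)
    (hlsc : LowerSemicontinuous f) (hcont : ContinuousOn f (interior {x | f x ≠ ⊤}))
    (hmono : MonotoneSet (insert (x₀, p₀) (graphSub f))) {c : X}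
    (hc : c ∈ interior {x | f x ≠ ⊤}) : f x₀ + p₀ (c - x₀) ≤ f c := by
  obtain ⟨τ, ⟨hτ0, hτ1⟩, hout, hin⟩ := hf.convex_dom.exists_threshold_of_mem_interior x₀ hc
  set v := c - x₀
  have hslope {u t : ℝ} := add_mul_le_of_monotoneSet_insert hbot hf hlsc hcont hmono hτ0 hin
    (u := u) (t := t)
  rcases hτ0.eq_or_lt with rfl | hτ
  · simpa [v] using hslope le_rfl zero_le_one le_rfl
  -- at the threshold, the line of slope `p₀ v - 1` lies below the graph of `f`, so some
  -- subgradient there has slope at most `p₀ v - 1` along `v`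
  exfalso
  have hτc : f (x₀ + τ • v) + ((1 - τ) * p₀ v : ℝ) ≤ f c := by
    simpa [v] using hslope le_rfl hτ1 le_rfl
  lift f c to ℝ using ⟨interior_subset hc, hbot c⟩ with fc hfc
  lift f (x₀ + τ • v) to ℝ using ⟨fun h => by
    rw [h, EReal.top_add_coe, top_le_iff] at hτc; exact EReal.coe_ne_top _ hτc, hbot _⟩ with m hm
  set k := p₀ v - 1
  have hC : (fun t : ℝ => (x₀ + t • v, m + (t - τ) * k)) '' Icc 0 1 =
      segment ℝ (x₀, m - τ * k) (c, m + (1 - τ) * k) := by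
    rw [segment_eq_image']
    congr 1
    funext t
    ext
    · simp [v]
    · simp; ring
  set C := (fun t : ℝ => (x₀ + t • v, m + (t - τ) * k)) '' Icc 0 1
  have hdisj : Disjoint (interior (epigraphE f)) C := by
    refine disjoint_left.2 ?_
    rintro _ hq ⟨t, ht, rfl⟩
    have hlt := lt_of_mem_interior_epigraphE hq
    rcases lt_or_ge t τ with htτ | htτ
    · exact hout t ⟨ht.1, htτ⟩ (ne_top_of_lt hlt)
    · have hle := (hslope le_rfl htτ ht.2).trans_lt hlt
      rw [← hm] at hle
      norm_cast at hle
      nlinarith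
  have hcC : (c, m + (1 - τ) * k) ∈ C := ⟨1, right_mem_Icc.2 zero_le_one, by simp [v]⟩
  have hck : m + (1 - τ) * k ≤ fc + 1 := by
    norm_cast at hτc
    nlinarith
  have hcint : (c, fc + 1) ∈ interior (epigraphE f) :=
    mem_interior_epigraphE_of_continuousAt (hcont.continuousAt (isOpen_interior.mem_nhds hc))
      (by rw [← hfc]; exact_mod_cast lt_add_one fc)
  obtain ⟨s, hs, hbelow⟩ := hf.exists_isSubgrad_of_disjoint (C := C) hm.symm
    (hC ▸ convex_segment _ _) ⟨τ, ⟨hτ0, hτ1⟩, by simp⟩ hdisj hck hcC hcint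
  have h0 := hbelow _ ⟨0, left_mem_Icc.2 zero_le_one, rfl⟩
  simp only [zero_smul, add_zero, sub_add_cancel_left, map_neg, map_smul, smul_eq_mul] at h0
  nlinarith [le_apply_of_monotoneSet_insert hmono hτ hs]

theorem isSubgrad_of_monotoneSet_insert (hproper : ProperE f) (hf : ConvexEpi f)
    (hlsc : LowerSemicontinuous f) (hint : (interior {x | f x ≠ ⊤}).Nonempty)
    (hcont : ContinuousOn f (interior {x | f x ≠ ⊤}))
    (hmono : MonotoneSet (insert (x₀, p₀) (graphSub f))) : IsSubgrad f x₀ p₀ := by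
  have hkey {c} := add_le_of_monotoneSet_insert (c := c) hproper.2 hf hlsc hcont hmono
  obtain ⟨c, hc⟩ := hint
  have hcx₀ := hkey hc
  lift f c to ℝ using ⟨interior_subset hc, hproper.2 c⟩ with fc hfc
  have hx₀ : f x₀ ≠ ⊤ := fun h => by
    rw [h, EReal.top_add_coe, top_le_iff] at hcx₀; exact EReal.coe_ne_top _ hcx₀
  obtain ⟨m, hm⟩ : ∃ m : ℝ, f x₀ = m := ⟨_, (EReal.coe_toReal hx₀ (hproper.2 x₀)).symm⟩
  have hne : (interior (epigraphE f)).Nonempty :=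
    ⟨_, mem_interior_epigraphE_of_continuousAt (hcont.continuousAt (isOpen_interior.mem_nhds hc))
      (by rw [← hfc]; exact_mod_cast lt_add_one fc)⟩
  refine ⟨hx₀, hproper.2 x₀, fun y => ?_⟩
  rw [hm, ← EReal.coe_add]
  refine hf.coe_le_of_forall_mem_interior_dom hne (ℓ := fun y => m + p₀ (y - x₀)) (by fun_prop)
    (fun x hx => ?_) y
  rw [EReal.coe_add, ← hm]
  exact hkey hx

end Key

theorem subdiff_maxMonotone_of_continuous_on_interior_general {X : Type*} [AddCommGroup X] [Module ℝ X] [TopologicalSpace X]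
    [IsTopologicalAddGroup X] [ContinuousSMul ℝ X]
    (f : X → EReal) (hproper : ProperE f) (hconv : ConvexEpi f)
    (hlsc : LowerSemicontinuous f)
    (hint : (interior {x | f x ≠ ⊤}).Nonempty)
    (hcont : ContinuousOn f (interior {x | f x ≠ ⊤})) :
    MaxMonotoneSet (graphSub f) := by
  refine ⟨monotoneSet_graphSub f, fun T hT hsub => (Subset.antisymm (fun q hq => ?_) hsub)⟩
  exact isSubgrad_of_monotoneSet_insert hproper hconv hlsc hint hcont
    (hT.mono (insert_subset hq hsub))

theorem subdiff_maxMonotone_of_continuous_on_interior {X : Type*} [AddCommGroup X] [Module ℝ X] [TopologicalSpace X]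
    [IsTopologicalAddGroup X] [ContinuousSMul ℝ X] [LocallyConvexSpace ℝ X] [T2Space X]
    (f : X → EReal) (hproper : ProperE f) (hconv : ConvexEpi f)
    (hlsc : LowerSemicontinuous f)
    (hint : (interior {x | f x ≠ ⊤}).Nonempty)
    (hcont : ContinuousOn f (interior {x | f x ≠ ⊤})) :
    MaxMonotoneSet (graphSub f) :=
  subdiff_maxMonotone_of_continuous_on_interior_general f hproper hconv hlsc hint hcont
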